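/- For α ∈ [0,1), let λ* be the largest real root of f(λ) = λ⁴ + (4−α²)λ³ + (11α⁴/4 − 12α² − 4)λ² + (2α⁶−α⁴−20α²−32)λ + 5α⁶−21α⁴+16α²−32 and let c* = (1/8)[3α²−4 + √(16+9α⁴+8α²(2λ*−1))]. Then the pair (λ*, c*) satisfies the characteristic equation q(λ*, c*, c*, α) = 0, where q(λ, c_A, c_B, α) is the characteristic polynomial of the symmetric tilted CHSH Bell operator; i.e., λ* is an eigenvalue of the 4×4 Bell operator with cosines c_A = c_B = c*. -/
import Mathlib


/-- The quartic `f(λ)` of the symmetric self-testing theorem. -/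
noncomputable def fQuartic (α t : ℝ) : ℝ :=
  t ^ 4 + (4 - α ^ 2) * t ^ 3 + (11 * α ^ 4 / 4 - 12 * α ^ 2 - 4) * t ^ 2
    + (2 * α ^ 6 - α ^ 4 - 20 * α ^ 2 - 32) * t
    + 5 * α ^ 6 - 21 * α ^ 4 + 16 * α ^ 2 - 32

/-- The characteristic polynomial `q(λ, c_A, c_B, α)` of the symmetric tilted
CHSH Bell operator. -/
def charPolySym (t cA cB α : ℝ) : ℝ :=
  t ^ 4 - (4 * α ^ 2 + 8) * t ^ 2
    + 8 * α ^ 2 * (cA * cB - cA - cB - 1) * t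
    + 8 * (2 * (cA ^ 2 + cB ^ 2 - cA ^ 2 * cB ^ 2)
      + α ^ 2 * (cA ^ 2 * cB + cA * cB ^ 2 - cA ^ 2 - cB ^ 2 - cA - cB))

set_option maxHeartbeats 2000000 in
/-- for `α ∈ [0,1)`, letting `λ*` be the largest real root of the
quartic `f` and `c* = (1/8)[3α²−4 + √(16+9α⁴+8α²(2λ*−1))]`, the pair `(λ*, c*)`
satisfies the characteristic equation `q(λ*, c*, c*, α) = 0`; i.e., `λ*` is an
eigenvalue of the 4×4 Bell operator with cosines `c_A = c_B = c*`. -/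
theorem largest_root_is_eigenvalue (α lamStar : ℝ) (hα : α ∈ Set.Ico (0:ℝ) 1)
    (hroot : IsGreatest {t : ℝ | fQuartic α t = 0} lamStar) :
    charPolySym lamStar
      ((1 / 8) * (3 * α ^ 2 - 4
        + Real.sqrt (16 + 9 * α ^ 4 + 8 * α ^ 2 * (2 * lamStar - 1))))
      ((1 / 8) * (3 * α ^ 2 - 4
        + Real.sqrt (16 + 9 * α ^ 4 + 8 * α ^ 2 * (2 * lamStar - 1))))
      α = 0 := by
  obtain ⟨hα0, hα1⟩ := hα
  have hx0 : (0:ℝ) ≤ α ^ 2 := sq_nonneg α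
  have hx1 : α ^ 2 < 1 := by nlinarith
  -- `λ* ≥ √(8+4α²)` via IVT between `√(8+4α²)` and `5`
  have hT0 : (0:ℝ) ≤ 8 + 4 * α ^ 2 := by nlinarith
  set T : ℝ := Real.sqrt (8 + 4 * α ^ 2) with hTdef
  have hT2 : T ^ 2 = 8 + 4 * α ^ 2 := Real.sq_sqrt hT0
  have hTnn : 0 ≤ T := Real.sqrt_nonneg _
  have hT5 : T ≤ 5 := by nlinarith [hT2, hTnn]
  have hfT : fQuartic α T ≤ 0 := by
    have h4 : T ^ 4 = (8 + 4 * α ^ 2) ^ 2 := by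
      calc T ^ 4 = (T ^ 2) ^ 2 := by ring
      _ = (8 + 4 * α ^ 2) ^ 2 := by rw [hT2]
    have h3 : T ^ 3 = (8 + 4 * α ^ 2) * T := by
      calc T ^ 3 = T ^ 2 * T := by ring
      _ = (8 + 4 * α ^ 2) * T := by rw [hT2]
    unfold fQuartic
    rw [h4, h3, hT2]
    nlinarith [mul_nonneg hx0 hTnn, mul_nonneg (mul_nonneg hx0 hx0) hTnn,
      mul_nonneg (mul_nonneg (mul_nonneg hx0 hx0) hx0) hTnn, sq_nonneg (α^2), sq_nonneg (α^3),
      mul_nonneg (mul_nonneg hx0 hx0) hx0]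
  have hf5 : (0:ℝ) ≤ fQuartic α 5 := by
    unfold fQuartic
    nlinarith [sq_nonneg (α^2), sq_nonneg (α^3), mul_nonneg (mul_nonneg hx0 hx0) hx0]
  have hcont : ContinuousOn (fun t => fQuartic α t) (Set.Icc T 5) := by
    unfold fQuartic; fun_prop
  have hIVT : ∃ r ∈ Set.Icc T 5, fQuartic α r = 0 := by
    have := intermediate_value_Icc hT5 hcont
    have h0mem : (0:ℝ) ∈ Set.Icc (fQuartic α T) (fQuartic α 5) := ⟨hfT, hf5⟩
    obtain ⟨r, hr, hr0⟩ := this h0mem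
    exact ⟨r, hr, hr0⟩
  obtain ⟨r, ⟨hrT, _⟩, hr0⟩ := hIVT
  have hlamT : T ≤ lamStar := le_trans hrT (hroot.2 hr0)
  have hlamnn : 0 ≤ lamStar := le_trans hTnn hlamT
  have hlam2 : 8 + 4 * α ^ 2 ≤ lamStar ^ 2 := by nlinarith [hlamT, hTnn]
  have hlamhalf : (1:ℝ) / 2 ≤ lamStar := by nlinarith
  have hf : fQuartic α lamStar = 0 := hroot.1
  -- the square root
  have hD0 : (0:ℝ) ≤ 16 + 9 * α ^ 4 + 8 * α ^ 2 * (2 * lamStar - 1) := by nlinarith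
  set s : ℝ := Real.sqrt (16 + 9 * α ^ 4 + 8 * α ^ 2 * (2 * lamStar - 1)) with hsdef
  have hs2 : s ^ 2 = 16 + 9 * α ^ 4 + 8 * α ^ 2 * (2 * lamStar - 1) := Real.sq_sqrt hD0
  have hsnn : 0 ≤ s := Real.sqrt_nonneg _
  -- abbreviations
  set t := lamStar with htdef
  set P : ℝ := 8 - 8*α^2 + 7*α^4 - (9/2)*α^6 + (27/32)*α^8 + 4*α^2*t - 10*α^4*t
      + (9/4)*α^6*t - 8*t^2 - 4*α^2*t^2 + α^4*t^2 + t^4 with hPdef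
  set Q : ℝ := -2 + (3/2)*α^2 - (11/8)*α^4 + (9/32)*α^6 - 2*α^2*t + (1/2)*α^4*t with hQdef
  have hQneg : Q < 0 := by
    rw [hQdef]; nlinarith [mul_nonneg hx0 hlamnn, sq_nonneg (α^2), sq_nonneg (α^3)]
  have h1mx : (0:ℝ) < 1 - α^2 := by linarith
  have h1mx' : (0:ℝ) ≤ 1 - α^2 := h1mx.le
  have h64 : α^6 ≤ α^4 := by nlinarith [pow_nonneg hx0 2, sq_nonneg (α^2)]
  have hC : (0:ℝ) < 8 - 8*α^2 + 7*α^4 - (9/2)*α^6 + (27/32)*α^8 := by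
    nlinarith [h64, sq_nonneg (8*α^2 - 8), pow_nonneg hx0 4, sq_nonneg (α^2 - 1)]
  have hq : (10*α^2 - 4 - (9/4)*α^4)^2
      ≤ 2*(8 - 8*α^2 + 7*α^4 - (9/2)*α^6 + (27/32)*α^8) + 2*(8*α^4 + 4*α^6) := by
    nlinarith [mul_nonneg hx0 (sq_nonneg (13*α^2 - 14)),
      mul_nonneg (mul_nonneg hx0 hx0) (mul_nonneg hx0 h1mx'),
      mul_nonneg hx0 hx0, mul_nonneg (mul_nonneg hx0 hx0) hx0]
  have hpsiK : (0:ℝ) < (8*α^4 + 4*α^6 + (8 - 8*α^2 + 7*α^4 - (9/2)*α^6 + (27/32)*α^8))^2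
      - (10*α^2 - 4 - (9/4)*α^4)^2 * (8*α^4 + 4*α^6) := by
    nlinarith [pow_pos h1mx 8,
      mul_nonneg (pow_nonneg hx0 1) (pow_nonneg h1mx' 7),
      mul_nonneg (pow_nonneg hx0 2) (pow_nonneg h1mx' 6),
      mul_nonneg (pow_nonneg hx0 3) (pow_nonneg h1mx' 5),
      mul_nonneg (pow_nonneg hx0 4) (pow_nonneg h1mx' 4),
      mul_nonneg (pow_nonneg hx0 5) (pow_nonneg h1mx' 3),
      mul_nonneg (pow_nonneg hx0 6) (pow_nonneg h1mx' 2),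
      mul_nonneg (pow_nonneg hx0 7) (pow_nonneg h1mx' 1),
      pow_nonneg hx0 8]
  have hbK : 8*α^4 + 4*α^6 ≤ (α^2*t)^2 := by
    nlinarith [mul_le_mul_of_nonneg_left hlam2 (sq_nonneg (α^2))]
  have h2 : (0:ℝ) ≤ (α^2*t)^2 + (8*α^4 + 4*α^6)
      + 2*(8 - 8*α^2 + 7*α^4 - (9/2)*α^6 + (27/32)*α^8) - (10*α^2 - 4 - (9/4)*α^4)^2 := by
    linarith
  have hpsi : (0:ℝ) < ((α^2*t)^2 + (8 - 8*α^2 + 7*α^4 - (9/2)*α^6 + (27/32)*α^8))^2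
      - (10*α^2 - 4 - (9/4)*α^4)^2 * (α^2*t)^2 := by
    nlinarith [hpsiK, mul_nonneg (by linarith : (0:ℝ) ≤ (α^2*t)^2 - (8*α^4 + 4*α^6)) h2,
      sq_nonneg (α^2*t)]
  have hquad : (0:ℝ) < (α^2*t)^2 - (10*α^2 - 4 - (9/4)*α^4)*(α^2*t)
      + (8 - 8*α^2 + 7*α^4 - (9/2)*α^6 + (27/32)*α^8) := by
    by_contra hcon
    push_neg at hcon
    have h2' : (0:ℝ) < (α^2*t)^2 + (8 - 8*α^2 + 7*α^4 - (9/2)*α^6 + (27/32)*α^8)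
        + (10*α^2 - 4 - (9/4)*α^4)*(α^2*t) := by nlinarith [hC, sq_nonneg (α^2*t)]
    nlinarith [hpsi, mul_nonneg (by linarith : (0:ℝ) ≤ -((α^2*t)^2
      - (10*α^2 - 4 - (9/4)*α^4)*(α^2*t)
      + (8 - 8*α^2 + 7*α^4 - (9/2)*α^6 + (27/32)*α^8))) h2'.le]
  have hPpos : 0 < P := by
    rw [hPdef]
    nlinarith [hquad, mul_nonneg (sq_nonneg t) (by linarith : (0:ℝ) ≤ t^2 - 8 - 4*α^2)]
  have hPmQ : 0 < P - Q * s := by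
    have : Q * s ≤ 0 := mul_nonpos_of_nonpos_of_nonneg hQneg.le hsnn
    linarith
  have hff : fQuartic α t = 0 := hf
  have hkey : (P + Q * s) * (P - Q * s) = 0 := by
    have hfexp : t ^ 4 + (4 - α ^ 2) * t ^ 3 + (11 * α ^ 4 / 4 - 12 * α ^ 2 - 4) * t ^ 2
        + (2 * α ^ 6 - α ^ 4 - 20 * α ^ 2 - 32) * t
        + 5 * α ^ 6 - 21 * α ^ 4 + 16 * α ^ 2 - 32 = 0 := hff
    rw [hPdef, hQdef]
    linear_combination (α^4 + 4*α^2*t - α^4*t + 4*t^2 - 4*α^2*t^2 + (1/4)*α^4*t^2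
        - 4*t^3 + α^2*t^3 + t^4) * hfexp
      + (-(-2 + (3/2)*α^2 - (11/8)*α^4 + (9/32)*α^6 - 2*α^2*t + (1/2)*α^4*t)^2) * hs2
  have hPQ : P + Q * s = 0 := by
    rcases mul_eq_zero.mp hkey with h | h
    · exact h
    · exact absurd h hPmQ.ne'
  show charPolySym t ((1/8)*(3*α^2 - 4 + s)) ((1/8)*(3*α^2 - 4 + s)) α = 0
  unfold charPolySym
  rw [hPdef, hQdef] at hPQ
  linear_combination hPQ + (1/16 + s/16 - s^2/256 - α^2/32 - α^2*s/64
      + (9/256)*α^4 + α^2*t/16) * hs2
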